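/- Let v be a weight such that v^{-1} is also a weight, and let {α_I}_{I∈𝒟} be a Carleson sequence (with respect to Lebesgue measure) with intensity B, i.e., ∑_{I∈𝒟(J)} α_I ≤ B|J| for all dyadic J. Then the sequence {α_I / m_I(v^{-1})}_{I∈𝒟} is a v-Carleson sequence with intensity at most 4B; that is, for all dyadic intervals J, (1/|J|) ∑_{I∈𝒟(J)} α_I / m_I(v^{-1}) ≤ 4 B m_J v. -/

import Mathlib

open MeasureTheory Set

noncomputable section

/-- A dyadic interval, indexed by scale `n` and position `k`,
representing `[k·2⁻ⁿ, (k+1)·2⁻ⁿ)`. -/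
abbrev DI : Type := ℤ × ℤ

/-- The underlying set of a dyadic interval. -/
def dSet (I : DI) : Set ℝ :=
  Set.Ico ((I.2 : ℝ) * (2:ℝ) ^ (-I.1)) (((I.2 : ℝ) + 1) * (2:ℝ) ^ (-I.1))

/-- The length `|I|` of a dyadic interval. -/
def dLen (I : DI) : ℝ := (2:ℝ) ^ (-I.1)

/-- The left child `I₋`. -/
def dLeft (I : DI) : DI := (I.1 + 1, 2 * I.2)

/-- The right child `I₊`. -/
def dRight (I : DI) : DI := (I.1 + 1, 2 * I.2 + 1)

/-- The dyadic parent `Î`. -/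
def dParent (I : DI) : DI := (I.1 - 1, I.2 / 2)

/-- `I` is a dyadic subinterval of `J`. -/
def dSub (I J : DI) : Prop := J.1 ≤ I.1 ∧ dSet I ⊆ dSet J

/-- The average `m_I f` of `f` over `I` (w.r.t. Lebesgue measure). -/
def avg (I : DI) (f : ℝ → ℝ) : ℝ := (dLen I)⁻¹ * ∫ x in dSet I, f x

/-- `v(I) = ∫_I v`. -/
def wMass (v : ℝ → ℝ) (I : DI) : ℝ := ∫ x in dSet I, v x

/-- The L²-normalized Haar function `h_I`. -/
def haar (I : DI) : ℝ → ℝ := fun x =>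
  (Real.sqrt (dLen I))⁻¹ *
    ((dSet (dRight I)).indicator (fun _ => (1:ℝ)) x
      - (dSet (dLeft I)).indicator (fun _ => (1:ℝ)) x)

/-- The Haar coefficient `⟨b, h_I⟩`. -/
def hInner (b : ℝ → ℝ) (I : DI) : ℝ := ∫ x, b x * haar I x

/-- `Δ_I v = m_{I₊} v − m_{I₋} v`. -/
def deltaAvg (v : ℝ → ℝ) (I : DI) : ℝ := avg (dRight I) v - avg (dLeft I) v

/-- A weight: a locally integrable, a.e. positive function on `ℝ`. -/
def IsWeight (v : ℝ → ℝ) : Prop :=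
  MeasureTheory.LocallyIntegrable v MeasureTheory.volume ∧
    ∀ᵐ x ∂(MeasureTheory.volume : MeasureTheory.Measure ℝ), 0 < v x

/-- The reciprocal `u⁻¹` of a function. -/
def inv' (u : ℝ → ℝ) : ℝ → ℝ := fun x => (u x)⁻¹

/-- `{lam I}` is a `v`-Carleson sequence with intensity `C`
(finite-sum formulation, equivalent for nonnegative sequences). -/
def IsCarleson (v : ℝ → ℝ) (lam : DI → ℝ) (C : ℝ) : Prop :=
  ∀ J : DI, ∀ F : Finset DI, (∀ I ∈ F, dSub I J) → ∑ I ∈ F, lam I ≤ C * wMass v J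

/-- The `L²(v)` norm. -/
def L2norm (v f : ℝ → ℝ) : ℝ := Real.sqrt (∫ x, (f x)^2 * v x)

/-- The pair `(u,v)` satisfies the joint dyadic `𝒜₂` condition with constant `Q`. -/
def JointA2 (u v : ℝ → ℝ) (Q : ℝ) : Prop :=
  ∀ I : DI, avg I (inv' u) * avg I v ≤ Q

/-- `v` is in the dyadic `RH₁` class with constant `R`. -/
def RH1 (v : ℝ → ℝ) (R : ℝ) : Prop :=
  ∀ I : DI, avg I (fun x => (v x / avg I v) * Real.log (v x / avg I v)) ≤ R

/-!
For `c ≥ 0` and `t > 0`, AM–GM gives `3c² − 2c³√t ≤ t⁻¹`; averaging over `I` with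
`c = 1 / m_I √v` yields `1 ≤ (m_I √v)² m_I(v⁻¹)`, so `α_I / m_I(v⁻¹) ≤ α_I (m_I √v)²`.
It remains to apply the dyadic Carleson embedding `∑_{I ⊆ J} α_I (m_I f)² ≤ 4B ∫_J f²` to
`f = √v`. The embedding is proved by induction down the dyadic tree, carrying the Bellman
function `4B w − 4B² y² / (B|I| + A)`, where `y = ∫_I f`, `w = ∫_I f²` and `A` is the Carleson
mass of the family below `I`; its main inequality combines Sedrakyan's lemma over the two
children with the bound `A ≤ B|I|`.
-/

lemma two_zpow_neg_succ (m : ℤ) : (2 : ℝ) ^ (-(m + 1)) = 2 ^ (-m) / 2 := by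
  rw [neg_add', zpow_sub_one₀ two_ne_zero, div_eq_mul_inv]

lemma dLen_pos (I : DI) : 0 < dLen I := zpow_pos two_pos _

lemma dSet_eq (I : DI) : dSet I = Ico (I.2 * dLen I) ((I.2 + 1) * dLen I) := rfl

lemma dSet_nonempty (I : DI) : (dSet I).Nonempty := by
  rw [dSet_eq]
  exact nonempty_Ico.2 (by linarith [dLen_pos I])

lemma dLen_dLeft (K : DI) : dLen (dLeft K) = dLen K / 2 := two_zpow_neg_succ K.1

lemma dLen_dRight (K : DI) : dLen (dRight K) = dLen K / 2 := two_zpow_neg_succ K.1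

instance (I : DI) : IsFiniteMeasure (volume.restrict (dSet I)) :=
  Real.isFiniteMeasure_restrict_Ico _ _

lemma volume_real_dSet (I : DI) : volume.real (dSet I) = dLen I := by
  rw [dSet_eq, Real.volume_real_Ico, max_eq_left (by linarith [dLen_pos I])]
  ring

lemma LocallyIntegrable.integrableOn_dSet {g : ℝ → ℝ} (hg : LocallyIntegrable g) (I : DI) :
    IntegrableOn g (dSet I) :=
  (hg.integrableOn_isCompact isCompact_Icc).mono_set Ico_subset_Icc_self

lemma setIntegral_dSet_const (I : DI) (c : ℝ) : ∫ _ in dSet I, c = c * dLen I := by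
  rw [setIntegral_const, volume_real_dSet, smul_eq_mul, mul_comm]

lemma avg_eq_div (I : DI) (f : ℝ → ℝ) : avg I f = (∫ x in dSet I, f x) / dLen I :=
  inv_mul_eq_div _ _

def dMid (K : DI) : ℝ := ((K.2 : ℝ) + 1 / 2) * 2 ^ (-K.1)

lemma dSet_dLeft (K : DI) : dSet (dLeft K) = Ico ((K.2 : ℝ) * 2 ^ (-K.1)) (dMid K) := by
  simp only [dSet, dLeft, dMid, two_zpow_neg_succ]
  push_cast
  congr 1 <;> ring

lemma dSet_dRight (K : DI) :
    dSet (dRight K) = Ico (dMid K) (((K.2 : ℝ) + 1) * 2 ^ (-K.1)) := by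
  simp only [dSet, dRight, dMid, two_zpow_neg_succ]
  push_cast
  congr 1 <;> ring

lemma dSet_dLeft_union_dRight (K : DI) : dSet (dLeft K) ∪ dSet (dRight K) = dSet K := by
  have hs : (0 : ℝ) < 2 ^ (-K.1) := zpow_pos two_pos _
  rw [dSet_dLeft, dSet_dRight, dSet, Ico_union_Ico_eq_Ico] <;> simp only [dMid] <;> nlinarith

lemma disjoint_dSet_dLeft_dRight (K : DI) : Disjoint (dSet (dLeft K)) (dSet (dRight K)) := by
  rw [dSet_dLeft, dSet_dRight]
  exact Ico_disjoint_Ico_same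

lemma dSub_dLeft (K : DI) : dSub (dLeft K) K :=
  ⟨by simp [dLeft], dSet_dLeft_union_dRight K ▸ subset_union_left⟩

lemma dSub_dRight (K : DI) : dSub (dRight K) K :=
  ⟨by simp [dRight], dSet_dLeft_union_dRight K ▸ subset_union_right⟩

lemma not_dSub_dLeft_and_dRight {I K : DI} (hL : dSub I (dLeft K)) (hR : dSub I (dRight K)) :
    False :=
  have ⟨_, hx⟩ := dSet_nonempty I
  disjoint_left.1 (disjoint_dSet_dLeft_dRight K) (hL.2 hx) (hR.2 hx)

lemma dSet_subset_Iio_or_Ici (I : DI) (p : ℤ) :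
    dSet I ⊆ Iio (p * 2 ^ (-I.1)) ∨ dSet I ⊆ Ici (p * 2 ^ (-I.1)) := by
  have hs : (0 : ℝ) < 2 ^ (-I.1) := zpow_pos two_pos _
  rcases le_or_gt (I.2 + 1) p with hp | hp
  · refine Or.inl fun x hx => hx.2.trans_le (mul_le_mul_of_nonneg_right ?_ hs.le)
    exact_mod_cast hp
  · refine Or.inr fun x hx => le_trans (mul_le_mul_of_nonneg_right ?_ hs.le) hx.1
    exact_mod_cast (show p ≤ I.2 by omega)

lemma exists_dMid_eq {I K : DI} (h : K.1 < I.1) : ∃ p : ℤ, dMid K = p * 2 ^ (-I.1) := by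
  obtain ⟨d, hd⟩ := Int.exists_add_of_le (show K.1 + 1 ≤ I.1 from h)
  refine ⟨(2 * K.2 + 1) * 2 ^ d, ?_⟩
  rw [dMid, hd, neg_add, zpow_add₀ two_ne_zero, two_zpow_neg_succ, zpow_neg 2 (d : ℤ), zpow_natCast]
  push_cast
  field_simp

lemma eq_of_fst_eq_of_dSet_subset {I K : DI} (h : I.1 = K.1) (hIK : dSet I ⊆ dSet K) : I = K := by
  obtain ⟨n, k⟩ := I
  obtain ⟨m, j⟩ := K
  obtain rfl : n = m := h
  have hs : (0 : ℝ) < 2 ^ (-n) := zpow_pos two_pos _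
  obtain ⟨hjk, hkj⟩ := (Ico_subset_Ico_iff (by nlinarith)).1 hIK
  have hjk' : (j : ℝ) ≤ k := le_of_mul_le_mul_right hjk hs
  have hkj' : (k : ℝ) + 1 ≤ j + 1 := le_of_mul_le_mul_right hkj hs
  have : j ≤ k := by exact_mod_cast hjk'
  have : k ≤ j := by exact_mod_cast (by linarith : (k : ℝ) ≤ j)
  simp only [Prod.mk.injEq, true_and]
  omega

lemma dSub_cases {I K : DI} (h : dSub I K) :
    I = K ∨ dSub I (dLeft K) ∨ dSub I (dRight K) := by
  rcases h.1.eq_or_lt with heq | hlt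
  · exact Or.inl (eq_of_fst_eq_of_dSet_subset heq.symm h.2)
  obtain ⟨p, hp⟩ := exists_dMid_eq hlt
  rcases dSet_subset_Iio_or_Ici I p with hL | hR
  · refine Or.inr (Or.inl ⟨hlt, fun x hx => ?_⟩)
    rw [dSet_dLeft]
    exact ⟨(h.2 hx).1, hp ▸ hL hx⟩
  · refine Or.inr (Or.inr ⟨hlt, fun x hx => ?_⟩)
    rw [dSet_dRight]
    exact ⟨hp ▸ hR hx, (h.2 hx).2⟩

lemma ne_of_dSub_dLeft {I K : DI} (h : dSub I (dLeft K)) : I ≠ K := by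
  rintro rfl
  simpa [dLeft] using h.1

lemma ne_of_dSub_dRight {I K : DI} (h : dSub I (dRight K)) : I ≠ K := by
  rintro rfl
  simpa [dRight] using h.1

open Classical in
lemma sum_eq_ite_add_sum_dSub_dLeft_add_sum_dSub_dRight {F : Finset DI} {K : DI}
    (hF : ∀ I ∈ F, dSub I K) (g : DI → ℝ) :
    ∑ I ∈ F, g I = (if K ∈ F then g K else 0) + ∑ I ∈ F with dSub I (dLeft K), g I +
      ∑ I ∈ F with dSub I (dRight K), g I := by
  rw [Finset.sum_filter, Finset.sum_filter, ← Finset.sum_ite_eq' F K g, ← Finset.sum_add_distrib,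
    ← Finset.sum_add_distrib]
  refine Finset.sum_congr rfl fun I hI => ?_
  rcases dSub_cases (hF I hI) with rfl | hL | hR
  · rw [if_pos rfl, if_neg fun h => ne_of_dSub_dLeft h rfl,
      if_neg fun h => ne_of_dSub_dRight h rfl]
    ring
  · rw [if_neg (ne_of_dSub_dLeft hL), if_pos hL, if_neg (not_dSub_dLeft_and_dRight hL)]
    ring
  · rw [if_neg (ne_of_dSub_dRight hR), if_neg fun hL => not_dSub_dLeft_and_dRight hL hR, if_pos hR]
    ring

lemma exists_fst_lt_add (F : Finset DI) (k : ℤ) : ∃ n : ℕ, ∀ I ∈ F, I.1 < k + n := by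
  obtain ⟨M, hM⟩ := (F.image Prod.fst).bddAbove
  refine ⟨(M + 1 - k).toNat, fun I hI => ?_⟩
  have := hM (Finset.mem_coe.2 (Finset.mem_image_of_mem Prod.fst hI))
  omega

lemma setIntegral_dSet_eq_add (K : DI) {g : ℝ → ℝ} (hg : IntegrableOn g (dSet K)) :
    ∫ x in dSet K, g x = (∫ x in dSet (dLeft K), g x) + ∫ x in dSet (dRight K), g x := by
  rw [← setIntegral_union (disjoint_dSet_dLeft_dRight K) measurableSet_Ico
    (hg.mono_set (dSub_dLeft K).2) (hg.mono_set (dSub_dRight K).2), dSet_dLeft_union_dRight]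

lemma mul_dLen_add_mul_setIntegral_le {g h : ℝ → ℝ} {K : DI} (hg : IntegrableOn g (dSet K))
    (hh : IntegrableOn h (dSet K)) {a b : ℝ} (hle : ∀ᵐ x, a + b * g x ≤ h x) :
    a * dLen K + b * ∫ x in dSet K, g x ≤ ∫ x in dSet K, h x :=
  calc a * dLen K + b * ∫ x in dSet K, g x = ∫ x in dSet K, (a + b * g x) := by
        rw [integral_add (integrable_const a) (hg.const_mul b), integral_const_mul,
          setIntegral_dSet_const]
    _ ≤ ∫ x in dSet K, h x :=
        setIntegral_mono_ae ((integrable_const a).add (hg.const_mul b)) hh hle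

lemma sq_setIntegral_le_dLen_mul {f : ℝ → ℝ} {K : DI} (hf : IntegrableOn f (dSet K))
    (hf2 : IntegrableOn (fun x => f x ^ 2) (dSet K)) :
    (∫ x in dSet K, f x) ^ 2 ≤ dLen K * ∫ x in dSet K, f x ^ 2 := by
  set y := ∫ x in dSet K, f x
  set c := y / dLen K
  have hl := dLen_pos K
  have := mul_dLen_add_mul_setIntegral_le hf hf2 (a := -c ^ 2) (b := 2 * c)
    (.of_forall fun x => by nlinarith [sq_nonneg (f x - c)])
  have hc : c * dLen K = y := div_mul_cancel₀ _ hl.ne'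
  nlinarith

lemma Integrable.sqrt {α : Type*} [MeasurableSpace α] {μ : Measure α} [IsFiniteMeasure μ]
    {g : α → ℝ} (hg : Integrable g μ) : Integrable (fun x => √(g x)) μ := by
  refine ((memLp_two_iff_integrable_sq
    (Real.continuous_sqrt.comp_aestronglyMeasurable hg.1)).2 ?_).integrable one_le_two
  simpa only [Real.sq_sqrt'] using hg.pos_part

/-- The Bellman function of the dyadic Carleson embedding with intensity `B`: `l` is the length of
the interval, `A` the Carleson mass it carries, `y` and `w` the integrals of `f` and `f²` over it. -/
def carlesonBellman (B l A y w : ℝ) : ℝ := 4 * B * w - 4 * B ^ 2 * y ^ 2 / (B * l + A)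

lemma carlesonBellman_le {B l A y w : ℝ} (hBA : 0 ≤ B * l + A) :
    carlesonBellman B l A y w ≤ 4 * B * w :=
  sub_le_self _ (by positivity)

lemma carlesonBellman_zero_nonneg {B l y w : ℝ} (hB : 0 ≤ B) (hl : 0 < l) (hy : y ^ 2 ≤ l * w) :
    0 ≤ carlesonBellman B l 0 y w := by
  rw [carlesonBellman, add_zero, sub_nonneg]
  calc 4 * B ^ 2 * y ^ 2 / (B * l) = 4 * B * (y ^ 2 / l) := by field_simp
    _ ≤ 4 * B * w := by gcongr; exact (div_le_iff₀' hl).2 hy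

lemma carlesonBellman_main_inequality {B l a AL AR yL yR wL wR : ℝ} (hB : 0 < B) (hl : 0 < l)
    (ha : 0 ≤ a) (hAL : 0 ≤ AL) (hAR : 0 ≤ AR) (hA : a + AL + AR ≤ B * l) :
    a * ((yL + yR) / l) ^ 2 + carlesonBellman B (l / 2) AL yL wL +
        carlesonBellman B (l / 2) AR yR wR ≤
      carlesonBellman B l (a + AL + AR) (yL + yR) (wL + wR) := by
  set P := B * l + (AL + AR)
  have hP : 0 < P := by positivity
  have hsplit : (yL + yR) ^ 2 / P ≤ yL ^ 2 / (B * (l / 2) + AL) + yR ^ 2 / (B * (l / 2) + AR) := by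
    have := Finset.sq_sum_div_le_sum_sq_div Finset.univ ![yL, yR]
      (g := ![B * (l / 2) + AL, B * (l / 2) + AR])
      (fun i _ => by fin_cases i <;> simp <;> positivity)
    simp only [Fin.sum_univ_two, Matrix.cons_val_zero, Matrix.cons_val_one] at this
    rwa [show B * (l / 2) + AL + (B * (l / 2) + AR) = P by ring] at this
  -- By the Carleson condition on the parent, both `P` and `P + a` are at most `2 B l`.
  have hgain : a / l ^ 2 + 4 * B ^ 2 / (P + a) ≤ 4 * B ^ 2 / P := by
    have hPa : P * (P + a) ≤ (2 * B * l) ^ 2 := by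
      rw [sq]
      exact mul_le_mul (by linarith) (by linarith) (by positivity) (by positivity)
    rw [div_add_div _ _ (by positivity) (by positivity), div_le_div_iff₀ (by positivity) hP]
    nlinarith [mul_le_mul_of_nonneg_left hPa ha]
  have hy := mul_le_mul_of_nonneg_right hgain (sq_nonneg (yL + yR))
  have hs := mul_le_mul_of_nonneg_left hsplit (by positivity : (0 : ℝ) ≤ 4 * B ^ 2)
  unfold carlesonBellman
  rw [show B * l + (a + AL + AR) = P + a by ring]
  linear_combination hy + hs

section Embedding

variable {f : ℝ → ℝ} {α : DI → ℝ} {B : ℝ}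

lemma sum_mul_sq_avg_le_carlesonBellman (hf : ∀ K, IntegrableOn f (dSet K))
    (hf2 : ∀ K, IntegrableOn (fun x => f x ^ 2) (dSet K)) (hα : ∀ I, 0 ≤ α I) (hB : 0 < B)
    (hCar : ∀ J : DI, ∀ F : Finset DI, (∀ I ∈ F, dSub I J) → ∑ I ∈ F, α I ≤ B * dLen J) :
    ∀ (n : ℕ) (K : DI) (F : Finset DI), (∀ I ∈ F, dSub I K ∧ I.1 < K.1 + n) →
      ∑ I ∈ F, α I * avg I f ^ 2 ≤
        carlesonBellman B (dLen K) (∑ I ∈ F, α I) (∫ x in dSet K, f x)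
          (∫ x in dSet K, f x ^ 2) := by
  intro n
  induction n with
  | zero =>
    intro K F hF
    obtain rfl : F = ∅ := Finset.eq_empty_of_forall_notMem fun I hI => by
      obtain ⟨⟨hKI, -⟩, hIK⟩ := hF I hI
      omega
    simpa using carlesonBellman_zero_nonneg hB.le (dLen_pos K)
      (sq_setIntegral_le_dLen_mul (hf K) (hf2 K))
  | succ n ih =>
    intro K F hF
    classical
    have hFK I (hI : I ∈ F) : dSub I K := (hF I hI).1
    have ihL := ih (dLeft K) (F.filter (dSub · (dLeft K))) fun I hI => by
      rw [Finset.mem_filter] at hI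
      exact ⟨hI.2, by have := (hF I hI.1).2; simp only [dLeft]; omega⟩
    have ihR := ih (dRight K) (F.filter (dSub · (dRight K))) fun I hI => by
      rw [Finset.mem_filter] at hI
      exact ⟨hI.2, by have := (hF I hI.1).2; simp only [dRight]; omega⟩
    rw [dLen_dLeft] at ihL
    rw [dLen_dRight] at ihR
    have hA := hCar K F hFK
    rw [sum_eq_ite_add_sum_dSub_dLeft_add_sum_dSub_dRight hFK] at hA
    rw [sum_eq_ite_add_sum_dSub_dLeft_add_sum_dSub_dRight hFK,
      sum_eq_ite_add_sum_dSub_dLeft_add_sum_dSub_dRight hFK, avg_eq_div,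
      setIntegral_dSet_eq_add K (hf K), setIntegral_dSet_eq_add K (hf2 K)]
    refine le_trans ?_ (carlesonBellman_main_inequality hB (dLen_pos K) ?_
      (Finset.sum_nonneg fun I _ => hα I) (Finset.sum_nonneg fun I _ => hα I) hA)
    · rw [← ite_zero_mul]
      gcongr
    · split_ifs
      exacts [hα K, le_rfl]

lemma sum_mul_sq_avg_le (hf : ∀ K, IntegrableOn f (dSet K))
    (hf2 : ∀ K, IntegrableOn (fun x => f x ^ 2) (dSet K)) (hα : ∀ I, 0 ≤ α I)
    (hCar : ∀ J : DI, ∀ F : Finset DI, (∀ I ∈ F, dSub I J) → ∑ I ∈ F, α I ≤ B * dLen J)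
    {J : DI} {F : Finset DI} (hF : ∀ I ∈ F, dSub I J) :
    ∑ I ∈ F, α I * avg I f ^ 2 ≤ 4 * B * ∫ x in dSet J, f x ^ 2 := by
  have hB : 0 ≤ B := by
    have := hCar J ∅ (by simp)
    rw [Finset.sum_empty] at this
    exact (mul_nonneg_iff_of_pos_right (dLen_pos J)).1 this
  have hαF : 0 ≤ ∑ I ∈ F, α I := Finset.sum_nonneg fun I _ => hα I
  rcases hB.eq_or_lt with rfl | hB
  · have hα0 := (Finset.sum_eq_zero_iff_of_nonneg fun I _ => hα I).1
      (le_antisymm (by simpa using hCar J F hF) hαF)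
    rw [Finset.sum_eq_zero fun I hI => by rw [hα0 I hI, zero_mul]]
    simp
  · obtain ⟨n, hn⟩ := exists_fst_lt_add F J.1
    exact (sum_mul_sq_avg_le_carlesonBellman hf hf2 hα hB hCar n J F
      fun I hI => ⟨hF I hI, hn I hI⟩).trans (carlesonBellman_le (by positivity [dLen_pos J]))

end Embedding

lemma avg_pos {g : ℝ → ℝ} {I : DI} (hpos : ∀ᵐ x, 0 < g x) (hg : IntegrableOn g (dSet I)) :
    0 < avg I g := by
  have hae : ∀ᵐ x ∂volume.restrict (dSet I), 0 < g x := ae_restrict_of_ae hpos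
  have hnull : volume.restrict (dSet I) (Function.support g)ᶜ = 0 :=
    measure_mono_null (fun x hx => by simp [Function.notMem_support.1 hx]) (ae_iff.1 hae)
  rw [avg_eq_div]
  refine div_pos ((integral_pos_iff_support_of_nonneg_ae (hae.mono fun _ h => h.le) hg).2 ?_)
    (dLen_pos I)
  rw [measure_congr (ae_eq_univ.2 hnull), Measure.restrict_apply_univ, dSet_eq, Real.volume_Ico,
    ENNReal.ofReal_pos]
  linarith [dLen_pos I]

lemma three_mul_sq_sub_le_inv {c t : ℝ} (hc : 0 ≤ c) (ht : 0 < t) :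
    3 * c ^ 2 + -2 * c ^ 3 * √t ≤ t⁻¹ := by
  set w := √t
  have hw : 0 < w := Real.sqrt_pos.2 ht
  rw [← Real.sq_sqrt ht.le, ← one_div, le_div_iff₀ (by positivity)]
  nlinarith [mul_nonneg (sq_nonneg (c * w - 1)) (by positivity : 0 ≤ 2 * c * w + 1)]

lemma one_le_sq_avg_sqrt_mul_avg_inv {v : ℝ → ℝ} {I : DI} (hpos : ∀ᵐ x, 0 < v x)
    (hv : IntegrableOn v (dSet I)) (hv' : IntegrableOn (inv' v) (dSet I)) :
    1 ≤ avg I (fun x => √(v x)) ^ 2 * avg I (inv' v) := by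
  have hsqrt : IntegrableOn (fun x => √(v x)) (dSet I) := Integrable.sqrt hv
  have hl := dLen_pos I
  have hint : ∫ x in dSet I, √(v x) = avg I (fun x => √(v x)) * dLen I := by
    rw [avg_eq_div, div_mul_cancel₀ _ hl.ne']
  have hint' : ∫ x in dSet I, inv' v x = avg I (inv' v) * dLen I := by
    rw [avg_eq_div, div_mul_cancel₀ _ hl.ne']
  set a := avg I (fun x => √(v x))
  have ha : 0 < a := avg_pos (hpos.mono fun x hx => Real.sqrt_pos.2 hx) hsqrt
  have key := mul_dLen_add_mul_setIntegral_le hsqrt hv' (a := 3 * a⁻¹ ^ 2) (b := -2 * a⁻¹ ^ 3)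
    (hpos.mono fun x hx => three_mul_sq_sub_le_inv (by positivity) hx)
  rw [hint, hint'] at key
  have hcancel : a⁻¹ ^ 3 * a = a⁻¹ ^ 2 := by field_simp
  have : a⁻¹ ^ 2 ≤ avg I (inv' v) :=
    le_of_mul_le_mul_right (by linear_combination key + 2 * dLen I * hcancel) hl
  calc (1 : ℝ) = a ^ 2 * a⁻¹ ^ 2 := by field_simp
    _ ≤ a ^ 2 * avg I (inv' v) := by gcongr

/-- Little Lemma: dividing a Lebesgue-Carleson sequence of intensity `B` by `m_I(v⁻¹)`
gives a `v`-Carleson sequence of intensity at most `4B`. -/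
theorem stmt2 (v : ℝ → ℝ) (hv : IsWeight v) (hv' : IsWeight (inv' v))
    (α : DI → ℝ) (hα : ∀ I, 0 ≤ α I) (B : ℝ)
    (hCar : ∀ J : DI, ∀ F : Finset DI, (∀ I ∈ F, dSub I J) → ∑ I ∈ F, α I ≤ B * dLen J) :
    IsCarleson v (fun I => α I / avg I (inv' v)) (4 * B) := by
  intro J F hF
  have hvI := LocallyIntegrable.integrableOn_dSet hv.1
  have hsq : ∀ K, (fun x => √(v x) ^ 2) =ᵐ[volume.restrict (dSet K)] v := fun K =>
    ae_restrict_of_ae (hv.2.mono fun x hx => Real.sq_sqrt hx.le)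
  have hterm (I : DI) : α I / avg I (inv' v) ≤ α I * avg I (fun x => √(v x)) ^ 2 := by
    have h := one_le_sq_avg_sqrt_mul_avg_inv hv.2 (hvI I)
      (LocallyIntegrable.integrableOn_dSet hv'.1 I)
    rw [div_le_iff₀ (pos_of_mul_pos_right (one_pos.trans_le h) (sq_nonneg _)), mul_assoc]
    exact le_mul_of_one_le_right (hα I) h
  calc ∑ I ∈ F, α I / avg I (inv' v)
      ≤ ∑ I ∈ F, α I * avg I (fun x => √(v x)) ^ 2 := Finset.sum_le_sum fun I _ => hterm I
    _ ≤ 4 * B * ∫ x in dSet J, √(v x) ^ 2 :=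
      sum_mul_sq_avg_le (fun K => Integrable.sqrt (hvI K))
        (fun K => (hvI K).congr (hsq K).symm) hα hCar hF
    _ = 4 * B * wMass v J := by rw [integral_congr_ae (hsq J), wMass]
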